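/- Let D be a weighted oriented uni-directed line with vertices V(D) = {x₁, ..., xₙ} and directed edges E(D) = {(xᵢ, x_{i+1}) : 1 ≤ i ≤ n-1}, and suppose for some i with 1 < i < n-1 one has wᵢ ≥ 2 and w_{i+1} = 1. Then the monomial f = x_{i-1} xᵢ^{wᵢ} x_{i+1}² x_{i+2}^{w_{i+2}} belongs to the third symbolic power I(D)^(3) of the edge ideal I(D) = (x₁x₂^{w₂}, ..., x_{n-1}xₙ^{wₙ}). -/

import Mathlib

open MvPolynomial

/-- A weighted oriented graph on the (finite) vertex type `V`: a set of directed
edges whose underlying edge set is a finite simple graph, together with a weight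
function `w : V → ℕ` with `w v ≥ 1` for every vertex. -/
structure WOGraph (V : Type*) where
  E : Set (V × V)
  w : V → ℕ
  loopless : ∀ v : V, (v, v) ∉ E
  one_dir : ∀ u v : V, (u, v) ∈ E → (v, u) ∉ E
  w_pos : ∀ v : V, 1 ≤ w v

namespace WOGraph

variable {V : Type*}

/-- The out-neighbourhood `N⁺(x)`. -/
def outN (D : WOGraph V) (x : V) : Set V := {y | (x, y) ∈ D.E}

/-- The in-neighbourhood `N⁻(x)`. -/
def inN (D : WOGraph V) (x : V) : Set V := {y | (y, x) ∈ D.E}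

/-- An isolated vertex: no neighbours at all. -/
def IsIsolated (D : WOGraph V) (x : V) : Prop := D.outN x = ∅ ∧ D.inN x = ∅

/-- A source: a non-isolated vertex with empty in-neighbourhood. -/
def IsSource (D : WOGraph V) (x : V) : Prop := ¬ D.IsIsolated x ∧ D.inN x = ∅

/-- A sink: a non-isolated vertex with empty out-neighbourhood. -/
def IsSink (D : WOGraph V) (x : V) : Prop := ¬ D.IsIsolated x ∧ D.outN x = ∅

/-- A vertex cover: a set of vertices meeting every edge. -/
def IsVertexCover (D : WOGraph V) (C : Set V) : Prop := ∀ e ∈ D.E, e.1 ∈ C ∨ e.2 ∈ C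

/-- `L₁(C) = {x ∈ C : N⁺(x) ∩ Cᶜ ≠ ∅}`. -/
def L1 (D : WOGraph V) (C : Set V) : Set V := {x ∈ C | (D.outN x ∩ Cᶜ).Nonempty}

/-- `L₂(C) = {x ∈ C \ L₁(C) : N⁻(x) ∩ Cᶜ ≠ ∅}`. -/
def L2 (D : WOGraph V) (C : Set V) : Set V :=
  {x ∈ C | x ∉ D.L1 C ∧ (D.inN x ∩ Cᶜ).Nonempty}

/-- `L₃(C) = C \ (L₁(C) ∪ L₂(C))`. -/
def L3 (D : WOGraph V) (C : Set V) : Set V := C \ (D.L1 C ∪ D.L2 C)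

/-- A strong vertex cover: a vertex cover `C` such that for each `x ∈ L₃(C)` there is an
edge `(y, x)` with `y ∈ L₂(C) ∪ L₃(C)` and `w(y) ≥ 2`. -/
def IsStrongVertexCover (D : WOGraph V) (C : Set V) : Prop :=
  D.IsVertexCover C ∧
    ∀ x ∈ D.L3 C, ∃ y : V, (y, x) ∈ D.E ∧ y ∈ D.L2 C ∪ D.L3 C ∧ 2 ≤ D.w y

/-- The edge ideal `I(D) = (x·y^{w(y)} : (x,y) ∈ E(D))` in `k[xᵥ : v ∈ V]`. -/
noncomputable def edgeIdeal (k : Type*) [Field k] (D : WOGraph V) : Ideal (MvPolynomial V k) :=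
  Ideal.span {f | ∃ e ∈ D.E, f = X e.1 * X e.2 ^ D.w e.2}

/-- The irreducible ideal `I_C = ({x : x ∈ L₁(C)} ∪ {x^{w(x)} : x ∈ L₂(C) ∪ L₃(C)})`
associated to a (strong) vertex cover `C`. -/
noncomputable def irredIdeal (k : Type*) [Field k] (D : WOGraph V) (C : Set V) : Ideal (MvPolynomial V k) :=
  Ideal.span ((fun v => (X v : MvPolynomial V k)) '' D.L1 C ∪
    (fun v => (X v : MvPolynomial V k) ^ D.w v) '' (D.L2 C ∪ D.L3 C))

/-- `D` is an oriented rooted tree with root `z`: `z` has no in-edges, and every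
non-isolated vertex `v ≠ z` is reachable from `z` by a directed path and has a unique
in-neighbour.  Equivalently, the underlying graph is a tree (on the support together
with the root) and every edge is directed away from the root `z` along the unique
path from `z`. -/
def IsOrientedRootedTree (D : WOGraph V) (z : V) : Prop :=
  (∀ u : V, (u, z) ∉ D.E) ∧
    ∀ v : V, ¬ D.IsIsolated v → v ≠ z →
      Relation.ReflTransGen (fun a b : V => (a, b) ∈ D.E) z v ∧ (∃! u : V, (u, v) ∈ D.E)

end WOGraph

/-- The `s`-th symbolic power `I^{(s)} = ⋂_{p ∈ Ass(R/I)} (I^s R_p ∩ R)` of an ideal `I`,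
where the contraction `I^s R_p ∩ R` is the preimage of `I^s R_p` under `R → R_p`. -/
noncomputable def symbolicPower {R : Type*} [CommRing R] (I : Ideal R) (s : ℕ) : Ideal R :=
  ⨅ p : associatedPrimes R (R ⧸ I),
    haveI : p.1.IsPrime := p.2.1
    (Ideal.map (algebraMap R (Localization p.1.primeCompl)) (I ^ s)).comap
      (algebraMap R (Localization p.1.primeCompl))

/-!
Let `a → b → c → d` be consecutive edges with `w b ≥ 2` and `w c = 1`, and
`f = a b^{w b} c² d^{w d}`. It suffices to find, for each associated prime `p` of `I = I(D)`,
a monomial `u ∉ p` with `u f ∈ I³`. If `c ∉ p`, take `u = c`: `c f` is divisible by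
`(b c)² (c d^{w d})`. If `c ∈ p` but `d ∉ p`, take `u = d^{w d}`: then `u f = (a b^{w b}) (c d^{w d})²`.
If `c, d ∈ p`, write `p = (I : g)` and pick a monomial `μ` of `g` outside `I`; for every variable
`x ∈ p`, `x μ ∈ I` forces an edge through `x` whose generator divides `x μ` but not `μ`. Since every
vertex of the line has in-degree at most one and `w c = 1`, this pins down `μ_c = μ_d = 0` and
`μ_y ≥ w y` for the successor `y` of `d`, whence `y ∉ p`; take `u = y^{w y}`, so that
`u f` is divisible by `(b c)² (d y^{w y})`.
-/

open Finsupp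

section SymbolicPower

variable {R : Type*} [CommRing R]

theorem mem_comap_map_localization_of_mul_mem {J p : Ideal R} [p.IsPrime] {u f : R}
    (hu : u ∉ p) (huf : u * f ∈ J) :
    f ∈ (J.map (algebraMap R (Localization p.primeCompl))).comap
      (algebraMap R (Localization p.primeCompl)) := by
  rw [Ideal.mem_comap, IsLocalization.mem_map_algebraMap_iff p.primeCompl]
  exact ⟨(⟨u * f, huf⟩, ⟨u, hu⟩), by simp [mul_comm]⟩

theorem mem_symbolicPower_of_forall_exists_mul_mem {I : Ideal R} {s : ℕ} {f : R}
    (h : ∀ p ∈ associatedPrimes R (R ⧸ I), ∃ u ∉ p, u * f ∈ I ^ s) :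
    f ∈ symbolicPower I s := by
  refine Submodule.mem_iInf _ |>.mpr fun p => ?_
  obtain ⟨u, hu, huf⟩ := h p.1 p.2
  exact mem_comap_map_localization_of_mul_mem hu huf

theorem Ideal.mul_mul_mem_pow_three {I : Ideal R} {a b c : R} (ha : a ∈ I) (hb : b ∈ I)
    (hc : c ∈ I) : a * b * c ∈ I ^ 3 := by
  rw [pow_succ, sq]
  exact Ideal.mul_mem_mul (Ideal.mul_mem_mul ha hb) hc

end SymbolicPower

section MonomialIdeal

variable {σ R : Type*} [CommRing R]

theorem exists_exponent_of_mem_associatedPrimes_span_monomial [IsNoetherianRing (MvPolynomial σ R)]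
    {S : Set (σ →₀ ℕ)} {p : Ideal (MvPolynomial σ R)}
    (hp : p ∈ associatedPrimes (MvPolynomial σ R)
      (MvPolynomial σ R ⧸ Ideal.span ((fun s => monomial s (1 : R)) '' S))) :
    ∃ μ : σ →₀ ℕ, (∀ s ∈ S, ¬ s ≤ μ) ∧ ∀ v, X v ∈ p → ∃ s ∈ S, s ≤ μ + single v 1 := by
  set I := Ideal.span ((fun s => monomial s (1 : R)) '' S)
  obtain ⟨hpr, x, hx⟩ := isAssociatedPrime_iff.mp hp
  obtain ⟨g, rfl⟩ := Ideal.Quotient.mk_surjective x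
  have hmem : ∀ r, r ∈ p ↔ r * g ∈ I := fun r => by
    rw [hx, Submodule.mem_colon_singleton, Submodule.mem_bot, ← Ideal.Quotient.eq_zero_iff_mem,
      map_mul]
    rfl
  have hg : g ∉ I := fun h => hpr.ne_top <| (Ideal.eq_top_iff_one p).mpr <| (hmem 1).mpr <| by
    rwa [one_mul]
  obtain ⟨μ, hμ, hμS⟩ : ∃ μ ∈ g.support, ∀ s ∈ S, ¬ s ≤ μ := by
    by_contra! h
    exact hg (mem_ideal_span_monomial_image.mpr h)
  refine ⟨μ, hμS, fun v hv => mem_ideal_span_monomial_image.mp ((hmem _).mp hv) _ ?_⟩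
  rwa [MvPolynomial.mem_support_iff, add_comm, coeff_X_mul, ← MvPolynomial.mem_support_iff]

end MonomialIdeal

theorem Finsupp.single_add_single_le_add_single {σ : Type*} {a b v : σ} (hab : a ≠ b) {m : ℕ}
    {μ : σ →₀ ℕ} (hle : single a 1 + single b m ≤ μ + single v 1)
    (hnot : ¬ single a 1 + single b m ≤ μ) :
    (v = a ∧ μ a = 0 ∧ m ≤ μ b) ∨ (v = b ∧ 1 ≤ μ a ∧ μ b + 1 = m) := by
  classical
  rw [Finsupp.le_def] at hle hnot
  push Not at hnot
  obtain ⟨x, hx⟩ := hnot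
  have hxv : x = v := by
    by_contra h
    have := hle x
    simp only [Finsupp.add_apply, Finsupp.single_apply, if_neg (Ne.symm h)] at this hx
    omega
  subst hxv
  have ha := hle a
  have hb := hle b
  simp only [Finsupp.add_apply, Finsupp.single_apply] at ha hb hx
  by_cases hxa : x = a
  · subst hxa
    simp only [hab, Ne.symm hab, if_true, if_false] at ha hb hx
    exact .inl ⟨rfl, by omega, by omega⟩
  · by_cases hxb : x = b
    · subst hxb
      simp only [hab, Ne.symm hab, if_true, if_false] at ha hb hx
      exact .inr ⟨rfl, by omega, by omega⟩
    · simp only [Ne.symm hxa, Ne.symm hxb, if_false] at hx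
      omega

namespace WOGraph

variable {V k : Type*} [Field k] (D : WOGraph V)

theorem edgeIdeal_eq_span_monomial :
    D.edgeIdeal k = Ideal.span ((fun s => monomial s (1 : k)) ''
      ((fun e : V × V => single e.1 1 + single e.2 (D.w e.2)) '' D.E)) := by
  have hgen (a b : V) (m : ℕ) : (X a * X b ^ m : MvPolynomial V k) =
      monomial (single a 1 + single b m) 1 := by
    rw [← pow_one (X a), X_pow_eq_monomial, X_pow_eq_monomial, monomial_mul, one_mul]
  rw [Set.image_image, edgeIdeal]
  congr 1
  ext f
  simp [hgen, eq_comm]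

theorem X_mul_X_pow_mem_edgeIdeal {a b : V} (h : (a, b) ∈ D.E) :
    (X a * X b ^ D.w b : MvPolynomial V k) ∈ D.edgeIdeal k :=
  Ideal.subset_span ⟨(a, b), h, rfl⟩

theorem exists_exponent_of_X_mem_associatedPrime [Finite V] {p : Ideal (MvPolynomial V k)}
    (hp : p ∈ associatedPrimes (MvPolynomial V k) (MvPolynomial V k ⧸ D.edgeIdeal k)) :
    ∃ μ : V →₀ ℕ, ∀ v, X v ∈ p → ∃ a b, (a, b) ∈ D.E ∧
      ((v = a ∧ μ a = 0 ∧ D.w b ≤ μ b) ∨ (v = b ∧ 1 ≤ μ a ∧ μ b + 1 = D.w b)) := by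
  rw [edgeIdeal_eq_span_monomial] at hp
  obtain ⟨μ, hμS, hμ⟩ := exists_exponent_of_mem_associatedPrimes_span_monomial hp
  refine ⟨μ, fun v hv => ?_⟩
  obtain ⟨_, ⟨⟨a, b⟩, he, rfl⟩, hle⟩ := hμ v hv
  have hab : a ≠ b := by
    rintro rfl
    exact D.loopless a he
  exact ⟨a, b, he, single_add_single_le_add_single hab hle (hμS _ ⟨_, he, rfl⟩)⟩

theorem exists_X_not_mem_of_inDegree_le_one [Finite V]
    (hin : ∀ u u' v, (u, v) ∈ D.E → (u', v) ∈ D.E → u = u') {c d : V} (hcd : (c, d) ∈ D.E)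
    (hwc : D.w c = 1) {p : Ideal (MvPolynomial V k)}
    (hp : p ∈ associatedPrimes (MvPolynomial V k) (MvPolynomial V k ⧸ D.edgeIdeal k))
    (hc : X c ∈ p) (hd : X d ∈ p) : ∃ y, (d, y) ∈ D.E ∧ X y ∉ p := by
  obtain ⟨μ, hμ⟩ := D.exists_exponent_of_X_mem_associatedPrime hp
  have hμc : μ c = 0 := by
    obtain ⟨_, _, -, ⟨rfl, h0, -⟩ | ⟨rfl, -, hw⟩⟩ := hμ c hc
    · exact h0
    · omega
  obtain ⟨d', y, hdy, ⟨hd', hμd, hwy⟩ | ⟨hy, h1, -⟩⟩ := hμ d hd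
  · subst d'
    refine ⟨y, hdy, fun hy => ?_⟩
    obtain ⟨u, y', huy, ⟨hu, h0, -⟩ | ⟨hy', h1, -⟩⟩ := hμ y hy
    · have := D.w_pos y
      subst u
      omega
    · subst y'
      rw [hin u d y huy hdy] at h1
      omega
  · subst y
    rw [hin d' c d hdy hcd] at h1
    omega

theorem mem_symbolicPower_three_of_path [Finite V]
    (hin : ∀ u u' v, (u, v) ∈ D.E → (u', v) ∈ D.E → u = u') {a b c d : V}
    (hab : (a, b) ∈ D.E) (hbc : (b, c) ∈ D.E) (hcd : (c, d) ∈ D.E)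
    (hwb : 2 ≤ D.w b) (hwc : D.w c = 1) :
    (X a * X b ^ D.w b * X c ^ 2 * X d ^ D.w d : MvPolynomial V k) ∈
      symbolicPower (D.edgeIdeal k) 3 := by
  have gab := D.X_mul_X_pow_mem_edgeIdeal (k := k) hab
  have gbc : (X b * X c : MvPolynomial V k) ∈ D.edgeIdeal k := by
    simpa [hwc] using D.X_mul_X_pow_mem_edgeIdeal (k := k) hbc
  have gcd := D.X_mul_X_pow_mem_edgeIdeal (k := k) hcd
  obtain ⟨m, hm⟩ := Nat.exists_eq_add_of_le hwb
  obtain ⟨m', hm'⟩ := Nat.exists_eq_add_of_le (D.w_pos d)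
  refine mem_symbolicPower_of_forall_exists_mul_mem fun p hp => ?_
  have hpr := hp.isPrime
  by_cases hc : X c ∈ p
  · by_cases hd : X d ∈ p
    · obtain ⟨y, hdy, hy⟩ := D.exists_X_not_mem_of_inDegree_le_one hin hcd hwc hp hc hd
      refine ⟨X y ^ D.w y, fun h => hy (hpr.mem_of_pow_mem _ h), ?_⟩
      have hfac : X y ^ D.w y * (X a * X b ^ D.w b * X c ^ 2 * X d ^ D.w d) =
          X b * X c * (X b * X c) * (X d * X y ^ D.w y) * (X a * X b ^ m * X d ^ m' :
            MvPolynomial V k) := by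
        rw [hm, hm']
        ring
      rw [hfac]
      exact Ideal.mul_mem_right _ _ <|
        Ideal.mul_mul_mem_pow_three gbc gbc (D.X_mul_X_pow_mem_edgeIdeal hdy)
    · refine ⟨X d ^ D.w d, fun h => hd (hpr.mem_of_pow_mem _ h), ?_⟩
      have hfac : X d ^ D.w d * (X a * X b ^ D.w b * X c ^ 2 * X d ^ D.w d) =
          X a * X b ^ D.w b * (X c * X d ^ D.w d) * (X c * X d ^ D.w d : MvPolynomial V k) := by
        ring
      rw [hfac]
      exact Ideal.mul_mul_mem_pow_three gab gcd gcd
  · refine ⟨X c, hc, ?_⟩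
    have hfac : X c * (X a * X b ^ D.w b * X c ^ 2 * X d ^ D.w d) =
        X b * X c * (X b * X c) * (X c * X d ^ D.w d) * (X a * X b ^ m : MvPolynomial V k) := by
      rw [hm]
      ring
    rw [hfac]
    exact Ideal.mul_mem_right _ _ (Ideal.mul_mul_mem_pow_three gbc gbc gcd)

end WOGraph

/-- Let `D` be a weighted oriented uni-directed line on vertices
`x₁, …, xₙ` (vertex `xₜ` is the index `t - 1 : Fin n`) with edges `(xᵢ, xᵢ₊₁)` for
`1 ≤ i ≤ n-1`, and suppose for some `1 < i < n-1` one has `wᵢ ≥ 2` and `wᵢ₊₁ = 1`.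
Then the monomial `f = xᵢ₋₁ · xᵢ^{wᵢ} · xᵢ₊₁² · xᵢ₊₂^{wᵢ₊₂}` belongs to `I(D)^{(3)}`. -/
theorem statement_8 {n : ℕ} (k : Type*) [Field k] (D : WOGraph (Fin n))
    (hE : D.E = {e : Fin n × Fin n | (e.2 : ℕ) = (e.1 : ℕ) + 1})
    (i : ℕ) (hi1 : 1 < i) (hi2 : i < n - 1)
    (hwi : 2 ≤ D.w ⟨i - 1, by omega⟩)
    (hwi1 : D.w ⟨i, by omega⟩ = 1) :
    (X ⟨i - 2, by omega⟩ * X ⟨i - 1, by omega⟩ ^ D.w ⟨i - 1, by omega⟩ *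
        X ⟨i, by omega⟩ ^ 2 *
        X ⟨i + 1, by omega⟩ ^ D.w ⟨i + 1, by omega⟩ : MvPolynomial (Fin n) k) ∈
      symbolicPower (D.edgeIdeal k) 3 := by
  have hline {u v : Fin n} : (u, v) ∈ D.E ↔ (v : ℕ) = u + 1 := by
    rw [hE, Set.mem_ofPred_eq]
  have hin (u u' v : Fin n) (hu : (u, v) ∈ D.E) (hu' : (u', v) ∈ D.E) : u = u' := by
    rw [hline] at hu hu'
    exact Fin.ext (by omega)
  refine D.mem_symbolicPower_three_of_path hin (hline.2 ?_) (hline.2 ?_) (hline.2 ?_) hwi hwi1 <;>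
    simp only <;> omega
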